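/- arXiv:2403.08075 — 5 statements merged into one kernel-verified Lean document; each statement's English description precedes it below -/
import Mathlib

section
/- Let n ≥ 2, R > 0, μ ≥ 0, and let φ : [0,∞) → ℝ be continuously differentiable with φ' ≤ 0. Let T : [0,R] → ℝ be twice continuously differentiable with T(0) = 0, T'(t) ≥ 0 for all t ∈ [0,R], T'(R) = 0, and suppose T''(t) + ((n−1)/t − φ'(t)) T'(t) + (μ − (n−1)/t²) T(t) = 0 for all t ∈ (0,R). Define h : (0,∞) → ℝ by h(t) = T(t) for t ∈ (0,R] and h(t) = T(R) for t > R. Then h is nondecreasing on (0,∞), and the function t ↦ h'(t)² + (n−1) h(t)²/t² (which equals T'(t)² + (n−1)T(t)²/t² on (0,R] and (n−1)T(R)²/t² for t > R) is nonincreasing on (0,∞). -/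
open Set

/-!
Along the radial ODE the energy `E = T'² + (n-1) T²/t²` satisfies
`E' = 2φ' T'² - 2μ T T' - 2(n-1)(t T' - T)²/t³`,
and every term is `≤ 0` because `φ' ≤ 0`, `μ ≥ 0` and `T, T' ≥ 0` (`T` is nondecreasing from
`T(0) = 0`). Beyond `R` the energy of the constant extension is `(n-1) T(R)²/t²`, which is
decreasing and, since `T'(R) = 0`, matches `E(R)`.
-/

theorem monotoneOn_Ioi_ite_le {α β : Type*} [LinearOrder α] [Preorder β] {f g : α → β}
    {a R : α} (hf : MonotoneOn f (Ioc a R)) (hg : MonotoneOn g (Ioi a)) (hfg : f R ≤ g R) :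
    MonotoneOn (fun t => if t ≤ R then f t else g t) (Ioi a) := by
  intro x hx y hy hxy
  dsimp only
  split_ifs with hxR hyR hyR
  · exact hf ⟨hx, hxR⟩ ⟨hy, hyR⟩ hxy
  · have hR : R ∈ Ioi a := lt_of_lt_of_le hx hxR
    calc f x ≤ f R := hf ⟨hx, hxR⟩ ⟨hR, le_rfl⟩ hxR
      _ ≤ g R := hfg
      _ ≤ g y := hg hR hy (le_of_not_ge hyR)
  · exact absurd (hxy.trans hyR) hxR
  · exact hg hx hy hxy

theorem antitoneOn_Ioi_ite_le {α β : Type*} [LinearOrder α] [Preorder β] {f g : α → β}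
    {a R : α} (hf : AntitoneOn f (Ioc a R)) (hg : AntitoneOn g (Ioi a)) (hfg : g R ≤ f R) :
    AntitoneOn (fun t => if t ≤ R then f t else g t) (Ioi a) :=
  monotoneOn_Ioi_ite_le (β := βᵒᵈ) hf hg hfg

theorem antitoneOn_div_sq {k : ℝ} (hk : 0 ≤ k) : AntitoneOn (fun t : ℝ => k / t ^ 2) (Ioi 0) :=
  fun x (hx : 0 < x) _ _ hxy => by dsimp only; gcongr

theorem hasDerivAt_of_hasDerivWithinAt_Icc {f f' : ℝ → ℝ} {a b : ℝ}
    (hf : ∀ t ∈ Icc a b, HasDerivWithinAt f (f' t) (Icc a b) t) {x : ℝ} (hx : x ∈ Ioo a b) :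
    HasDerivAt f (f' x) x :=
  (hf x (Ioo_subset_Icc_self hx)).hasDerivAt (Icc_mem_nhds hx.1 hx.2)

theorem hasDerivAt_sq_add_mul_sq_div_sq {T T' : ℝ → ℝ} {c x t' t'' : ℝ}
    (hT : HasDerivAt T t' x) (hT' : HasDerivAt T' t'' x) (hx : x ≠ 0) :
    HasDerivAt (fun t => T' t ^ 2 + c * T t ^ 2 / t ^ 2)
      (2 * T' x * t'' + 2 * c * T x * (x * t' - T x) / x ^ 3) x := by
  refine ((hT'.fun_pow 2).add (((hT.fun_pow 2).const_mul c).div (hasDerivAt_pow 2 x)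
    (pow_ne_zero 2 hx))).congr_deriv ?_
  field_simp
  ring

theorem radial_energy_rate_nonpos {c μ p x y y' y'' : ℝ} (hc : 0 ≤ c) (hμ : 0 ≤ μ)
    (hp : p ≤ 0) (hx : 0 < x) (hy : 0 ≤ y) (hy' : 0 ≤ y')
    (hode : y'' + (c / x - p) * y' + (μ - c / x ^ 2) * y = 0) :
    2 * y' * y'' + 2 * c * y * (x * y' - y) / x ^ 3 ≤ 0 := by
  have hrate : 2 * y' * y'' + 2 * c * y * (x * y' - y) / x ^ 3
      = 2 * p * y' ^ 2 - 2 * μ * y * y' - 2 * c * (x * y' - y) ^ 2 / x ^ 3 := by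
    have hy'' : y'' = -((c / x - p) * y') - (μ - c / x ^ 2) * y := by linarith
    rw [hy'']
    field_simp
    ring
  have hp_term : 2 * p * y' ^ 2 ≤ 0 := by nlinarith [sq_nonneg y']
  have hμ_term : 0 ≤ 2 * μ * y * y' := by positivity
  have hc_term : 0 ≤ 2 * c * (x * y' - y) ^ 2 / x ^ 3 := by positivity
  linarith

theorem antitoneOn_Ioc_radial_energy {c μ R : ℝ} {p T T' T'' : ℝ → ℝ} (hc : 0 ≤ c)
    (hμ : 0 ≤ μ) (hp : ∀ t ∈ Ioo 0 R, p t ≤ 0)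
    (hT : ∀ t ∈ Icc 0 R, HasDerivWithinAt T (T' t) (Icc 0 R) t)
    (hT' : ∀ t ∈ Icc 0 R, HasDerivWithinAt T' (T'' t) (Icc 0 R) t)
    (hT_nonneg : ∀ t ∈ Ioo 0 R, 0 ≤ T t) (hT'_nonneg : ∀ t ∈ Ioo 0 R, 0 ≤ T' t)
    (hODE : ∀ t ∈ Ioo 0 R, T'' t + (c / t - p t) * T' t + (μ - c / t ^ 2) * T t = 0) :
    AntitoneOn (fun t => T' t ^ 2 + c * T t ^ 2 / t ^ 2) (Ioc 0 R) := by
  have hTc : ContinuousOn T (Ioc 0 R) := fun t ht =>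
    ((hT t (Ioc_subset_Icc_self ht)).continuousWithinAt).mono Ioc_subset_Icc_self
  have hT'c : ContinuousOn T' (Ioc 0 R) := fun t ht =>
    ((hT' t (Ioc_subset_Icc_self ht)).continuousWithinAt).mono Ioc_subset_Icc_self
  refine antitoneOn_of_hasDerivWithinAt_nonpos (convex_Ioc 0 R)
    (f' := fun x => 2 * T' x * T'' x + 2 * c * T x * (x * T' x - T x) / x ^ 3)
    ((hT'c.pow 2).add ((hTc.pow 2).const_mul c |>.div (continuousOn_id.pow 2)
      fun t ht => pow_ne_zero 2 ht.1.ne'))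
    (fun x hx => ?_) (fun x hx => ?_)
  all_goals rw [interior_Ioc] at hx
  · exact (hasDerivAt_sq_add_mul_sq_div_sq
      (hasDerivAt_of_hasDerivWithinAt_Icc hT hx) (hasDerivAt_of_hasDerivWithinAt_Icc hT' hx)
      hx.1.ne').hasDerivWithinAt
  · exact radial_energy_rate_nonpos hc hμ (hp x hx) hx.1 (hT_nonneg x hx) (hT'_nonneg x hx)
      (hODE x hx)

theorem radial_profile_monotone_euclidean_general
    (n : ℕ) (hn : 2 ≤ n) (R μ : ℝ) (hμ : 0 ≤ μ)
    (φ' : ℝ → ℝ)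
    (hφ'nonpos : ∀ t ∈ Ici (0 : ℝ), φ' t ≤ 0)
    (T T' T'' : ℝ → ℝ)
    (hT : ∀ t ∈ Icc (0 : ℝ) R, HasDerivWithinAt T (T' t) (Icc 0 R) t)
    (hT' : ∀ t ∈ Icc (0 : ℝ) R, HasDerivWithinAt T' (T'' t) (Icc 0 R) t)
    (hT0 : T 0 = 0)
    (hT'nonneg : ∀ t ∈ Icc (0 : ℝ) R, 0 ≤ T' t)
    (hT'R : T' R = 0)
    (hODE : ∀ t ∈ Ioo (0 : ℝ) R,
      T'' t + (((n : ℝ) - 1) / t - φ' t) * T' t + (μ - ((n : ℝ) - 1) / t ^ 2) * T t = 0) :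
    MonotoneOn (fun t => if t ≤ R then T t else T R) (Ioi (0 : ℝ)) ∧
    AntitoneOn (fun t => if t ≤ R then T' t ^ 2 + ((n : ℝ) - 1) * T t ^ 2 / t ^ 2
      else ((n : ℝ) - 1) * T R ^ 2 / t ^ 2) (Ioi (0 : ℝ)) := by
  have hc : (0 : ℝ) ≤ n - 1 := by
    have : (2 : ℝ) ≤ n := by exact_mod_cast hn
    linarith
  have hTmono : MonotoneOn T (Icc 0 R) :=
    monotoneOn_of_hasDerivWithinAt_nonneg (convex_Icc 0 R)
      (fun t ht => (hT t ht).continuousWithinAt)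
      (fun t ht => (hT t (interior_subset ht)).mono interior_subset)
      (fun t ht => hT'nonneg t (interior_subset ht))
  have hTnonneg : ∀ t ∈ Icc 0 R, 0 ≤ T t := fun t ht =>
    hT0 ▸ hTmono ⟨le_rfl, ht.1.trans ht.2⟩ ht ht.1
  refine ⟨monotoneOn_Ioi_ite_le (hTmono.mono Ioc_subset_Icc_self) monotoneOn_const le_rfl,
    antitoneOn_Ioi_ite_le ?_ (antitoneOn_div_sq (by positivity)) (by simp [hT'R])⟩
  exact antitoneOn_Ioc_radial_energy hc hμ (fun t ht => hφ'nonpos t ht.1.le) hT hT'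
    (fun t ht => hTnonneg t (Ioo_subset_Icc_self ht))
    (fun t ht => hT'nonneg t (Ioo_subset_Icc_self ht)) hODE

/-- **Lemma 4.3 (Euclidean radial profile)**: let `T` solve the radial ODE
`T'' + ((n-1)/t - φ') T' + (μ - (n-1)/t²) T = 0` on `(0,R)` with `T(0) = 0`, `T' ≥ 0` on
`[0,R]` and `T'(R) = 0`, where `μ ≥ 0` and `φ` is continuously differentiable with
`φ' ≤ 0`. Then the extension `h` of `T` by the constant value `T(R)` for `t > R` is
nondecreasing on `(0,∞)`, and `t ↦ h'(t)² + (n-1) h(t)²/t²` (which equals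
`T'(t)² + (n-1)T(t)²/t²` on `(0,R]` and `(n-1)T(R)²/t²` for `t > R`) is nonincreasing on
`(0,∞)`. -/
theorem radial_profile_monotone_euclidean
    (n : ℕ) (hn : 2 ≤ n) (R μ : ℝ) (hR : 0 < R) (hμ : 0 ≤ μ)
    (φ φ' : ℝ → ℝ)
    (hφ : ∀ t ∈ Ici (0 : ℝ), HasDerivWithinAt φ (φ' t) (Ici 0) t)
    (hφ'cont : ContinuousOn φ' (Ici 0))
    (hφ'nonpos : ∀ t ∈ Ici (0 : ℝ), φ' t ≤ 0)
    (T T' T'' : ℝ → ℝ)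
    (hT : ∀ t ∈ Icc (0 : ℝ) R, HasDerivWithinAt T (T' t) (Icc 0 R) t)
    (hT' : ∀ t ∈ Icc (0 : ℝ) R, HasDerivWithinAt T' (T'' t) (Icc 0 R) t)
    (hT''cont : ContinuousOn T'' (Icc 0 R))
    (hT0 : T 0 = 0)
    (hT'nonneg : ∀ t ∈ Icc (0 : ℝ) R, 0 ≤ T' t)
    (hT'R : T' R = 0)
    (hODE : ∀ t ∈ Ioo (0 : ℝ) R,
      T'' t + (((n : ℝ) - 1) / t - φ' t) * T' t + (μ - ((n : ℝ) - 1) / t ^ 2) * T t = 0) :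
    MonotoneOn (fun t => if t ≤ R then T t else T R) (Ioi (0 : ℝ)) ∧
    AntitoneOn (fun t => if t ≤ R then T' t ^ 2 + ((n : ℝ) - 1) * T t ^ 2 / t ^ 2
      else ((n : ℝ) - 1) * T R ^ 2 / t ^ 2) (Ioi (0 : ℝ)) :=
  radial_profile_monotone_euclidean_general n hn R μ hμ φ' hφ'nonpos T T' T'' hT hT' hT0 hT'nonneg
    hT'R hODE
end

section
/- Let n ≥ 2, R > 0, μ ≥ 0, and let φ : [0,∞) → ℝ be continuously differentiable with φ' ≤ 0. Let T : [0,R] → ℝ be twice continuously differentiable with T(0) = 0 and T'(t) ≥ 0 for all t ∈ [0,R], and suppose T''(t) + ((n−1)·cosh(t)/sinh(t) − φ'(t)) T'(t) + (μ − (n−1)/sinh(t)²) T(t) = 0 for all t ∈ (0,R). Then the function t ↦ T'(t)² + (n−1) T(t)²/sinh(t)² is nonincreasing on (0,R). -/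
/-!
Write `s = sinh t`, `c = cosh t` and `k = n - 1`. Differentiating the energy
`E = T'² + k T²/s²` and eliminating `T''` with the equation gives
`E' = 2φ' T'² - 2μ T T' - 2k (c (sT')² - 2 (sT') T + c T²) / s³`.
The quadratic form `c u² - 2uv + c v²` is nonnegative because `c ≥ 1`, and `T ≥ 0` since `T(0) = 0`
and `T' ≥ 0`, so every term is nonpositive.
-/

open Set Real

lemma quadratic_form_nonneg_of_one_le {c : ℝ} (hc : 1 ≤ c) (u v : ℝ) :
    0 ≤ c * u ^ 2 - 2 * u * v + c * v ^ 2 := by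
  nlinarith [sq_nonneg (u - v), sq_nonneg u, sq_nonneg v]

lemma hasDerivAt_sq_add_mul_sq_div_sinh_sq (k : ℝ) {T T' : ℝ → ℝ} {t T'' : ℝ}
    (hT : HasDerivAt T (T' t) t) (hT' : HasDerivAt T' T'' t) (ht : sinh t ≠ 0) :
    HasDerivAt (fun t => T' t ^ 2 + k * T t ^ 2 / sinh t ^ 2)
      (2 * T' t * T'' + 2 * k * T t * (T' t * sinh t - T t * cosh t) / sinh t ^ 3) t := by
  have hnum := (hT.fun_pow 2).const_mul k
  have hden := (hasDerivAt_sinh t).fun_pow 2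
  refine ((hT'.fun_pow 2).add (hnum.div hden (pow_ne_zero 2 ht))).congr_deriv ?_
  field_simp
  ring

/-- The derivative of the energy along a solution of the radial equation, written at a point
with `x = T t`, `y = T' t`, `z = T'' t`, `s = sinh t`, `c = cosh t`, `b = φ' t`. -/
lemma radial_energy_deriv_nonpos {k μ b s c x y z : ℝ} (hk : 0 ≤ k) (hμ : 0 ≤ μ) (hb : b ≤ 0)
    (hs : 0 < s) (hc : 1 ≤ c) (hx : 0 ≤ x) (hy : 0 ≤ y)
    (hode : z + (k * c / s - b) * y + (μ - k / s ^ 2) * x = 0) :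
    2 * y * z + 2 * k * x * (y * s - x * c) / s ^ 3 ≤ 0 := by
  have hz : z = -(k * c / s - b) * y - (μ - k / s ^ 2) * x := by linarith
  have key : 2 * y * z + 2 * k * x * (y * s - x * c) / s ^ 3 =
      2 * b * y ^ 2 - 2 * μ * x * y -
        2 * k * (c * (s * y) ^ 2 - 2 * (s * y) * x + c * x ^ 2) / s ^ 3 := by
    rw [hz]
    field_simp
    ring
  rw [key]
  have hq := quadratic_form_nonneg_of_one_le hc (s * y) x
  have : 0 ≤ 2 * k * (c * (s * y) ^ 2 - 2 * (s * y) * x + c * x ^ 2) / s ^ 3 := by positivity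
  nlinarith [mul_nonneg hμ (mul_nonneg hx hy), mul_nonpos_of_nonpos_of_nonneg hb (sq_nonneg y)]

lemma nonneg_of_hasDerivWithinAt_nonneg_Icc {T T' : ℝ → ℝ} {R : ℝ}
    (hT : ∀ t ∈ Icc 0 R, HasDerivWithinAt T (T' t) (Icc 0 R) t) (hT0 : T 0 = 0)
    (hT' : ∀ t ∈ Icc 0 R, 0 ≤ T' t) {t : ℝ} (ht : t ∈ Icc 0 R) : 0 ≤ T t := by
  have hmono : MonotoneOn T (Icc 0 R) := by
    refine monotoneOn_of_hasDerivWithinAt_nonneg (convex_Icc 0 R)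
      (fun t ht => (hT t ht).continuousWithinAt) (fun t ht => ?_)
      (fun t ht => hT' t (interior_subset ht))
    exact (hT t (interior_subset ht)).mono interior_subset
  simpa [hT0] using hmono ⟨le_rfl, ht.1.trans ht.2⟩ ht ht.1

theorem radial_profile_antitone_hyperbolic_general
    (n : ℕ) (hn : 2 ≤ n) (R μ : ℝ) (hμ : 0 ≤ μ)
    (φ' : ℝ → ℝ)
    (hφ'nonpos : ∀ t ∈ Ici (0 : ℝ), φ' t ≤ 0)
    (T T' T'' : ℝ → ℝ)
    (hT : ∀ t ∈ Icc (0 : ℝ) R, HasDerivWithinAt T (T' t) (Icc 0 R) t)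
    (hT' : ∀ t ∈ Icc (0 : ℝ) R, HasDerivWithinAt T' (T'' t) (Icc 0 R) t)
    (hT0 : T 0 = 0)
    (hT'nonneg : ∀ t ∈ Icc (0 : ℝ) R, 0 ≤ T' t)
    (hODE : ∀ t ∈ Ioo (0 : ℝ) R,
      T'' t + (((n : ℝ) - 1) * Real.cosh t / Real.sinh t - φ' t) * T' t +
        (μ - ((n : ℝ) - 1) / Real.sinh t ^ 2) * T t = 0) :
    AntitoneOn (fun t => T' t ^ 2 + ((n : ℝ) - 1) * T t ^ 2 / Real.sinh t ^ 2)
      (Ioo (0 : ℝ) R) := by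
  have hk : (0 : ℝ) ≤ (n : ℝ) - 1 := by
    have : (2 : ℝ) ≤ n := by exact_mod_cast hn
    linarith
  have hE : ∀ t ∈ Ioo (0 : ℝ) R, HasDerivAt
      (fun t => T' t ^ 2 + ((n : ℝ) - 1) * T t ^ 2 / sinh t ^ 2)
      (2 * T' t * T'' t + 2 * ((n : ℝ) - 1) * T t * (T' t * sinh t - T t * cosh t) / sinh t ^ 3)
      t := fun t ht =>
    hasDerivAt_sq_add_mul_sq_div_sinh_sq _
      ((hT t (Ioo_subset_Icc_self ht)).hasDerivAt (Icc_mem_nhds ht.1 ht.2))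
      ((hT' t (Ioo_subset_Icc_self ht)).hasDerivAt (Icc_mem_nhds ht.1 ht.2))
      (sinh_pos_iff.2 ht.1).ne'
  refine antitoneOn_of_hasDerivWithinAt_nonpos (convex_Ioo 0 R)
    (fun t ht => (hE t ht).continuousAt.continuousWithinAt)
    (fun t ht => (hE t (interior_subset ht)).hasDerivWithinAt) (fun t ht => ?_)
  rw [interior_Ioo] at ht
  exact radial_energy_deriv_nonpos hk hμ (hφ'nonpos t ht.1.le) (sinh_pos_iff.2 ht.1)
    (one_le_cosh t)
    (nonneg_of_hasDerivWithinAt_nonneg_Icc hT hT0 hT'nonneg (Ioo_subset_Icc_self ht))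
    (hT'nonneg t (Ioo_subset_Icc_self ht)) (hODE t ht)

/-- **Hyperbolic radial profile monotonicity** (as used in the proof of Theorem 1.8): let
`T` solve the radial ODE `T'' + ((n-1) cosh t / sinh t - φ') T' + (μ - (n-1)/sinh² t) T = 0`
on `(0,R)` with `T(0) = 0` and `T' ≥ 0` on `[0,R]`, where `μ ≥ 0` and `φ` is continuously
differentiable with `φ' ≤ 0`. Then `t ↦ T'(t)² + (n-1) T(t)²/sinh(t)²` is nonincreasing on
`(0,R)`. -/
theorem radial_profile_antitone_hyperbolic
    (n : ℕ) (hn : 2 ≤ n) (R μ : ℝ) (hR : 0 < R) (hμ : 0 ≤ μ)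
    (φ φ' : ℝ → ℝ)
    (hφ : ∀ t ∈ Ici (0 : ℝ), HasDerivWithinAt φ (φ' t) (Ici 0) t)
    (hφ'cont : ContinuousOn φ' (Ici 0))
    (hφ'nonpos : ∀ t ∈ Ici (0 : ℝ), φ' t ≤ 0)
    (T T' T'' : ℝ → ℝ)
    (hT : ∀ t ∈ Icc (0 : ℝ) R, HasDerivWithinAt T (T' t) (Icc 0 R) t)
    (hT' : ∀ t ∈ Icc (0 : ℝ) R, HasDerivWithinAt T' (T'' t) (Icc 0 R) t)
    (hT''cont : ContinuousOn T'' (Icc 0 R))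
    (hT0 : T 0 = 0)
    (hT'nonneg : ∀ t ∈ Icc (0 : ℝ) R, 0 ≤ T' t)
    (hODE : ∀ t ∈ Ioo (0 : ℝ) R,
      T'' t + (((n : ℝ) - 1) * Real.cosh t / Real.sinh t - φ' t) * T' t +
        (μ - ((n : ℝ) - 1) / Real.sinh t ^ 2) * T t = 0) :
    AntitoneOn (fun t => T' t ^ 2 + ((n : ℝ) - 1) * T t ^ 2 / Real.sinh t ^ 2)
      (Ioo (0 : ℝ) R) :=
  radial_profile_antitone_hyperbolic_general n hn R μ hμ φ' hφ'nonpos T T' T'' hT hT' hT0 hT'nonneg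
    hODE
end

section
/- Let n ≥ 2, let φ : [0,∞) → ℝ be continuous, let Ω ⊆ ℝⁿ be a bounded measurable set, and let R > 0 be such that η(Ω) = η(B_R(o)), where η is the measure with density x ↦ e^{−φ(‖x‖)} with respect to Lebesgue measure and B_R(o) is the open ball of radius R centered at the origin. (i) If v : [0,∞) → ℝ is nondecreasing and bounded on bounded sets, then ∫_Ω v(‖x‖) dη(x) ≥ ∫_{B_R(o)} v(‖x‖) dη(x). (ii) If u : [0,∞) → ℝ is nonincreasing and bounded on bounded sets, then ∫_Ω u(‖x‖) dη(x) ≤ ∫_{B_R(o)} u(‖x‖) dη(x). Moreover, if v (respectively u) is strictly increasing (respectively strictly decreasing), then equality in (i) (respectively (ii)) holds if and only if the symmetric difference of Ω and B_R(o) has Lebesgue measure zero. -/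
/-! Since `η` is finite on bounded sets and `η Ω = η B` for `B = B_R(o)`, the pieces `Ω \ B` and
`B \ Ω` carry the same weighted mass. A nondecreasing radial function is at least `v R` on
`Ω \ B` and at most `v R` on `B \ Ω`, so trading `B \ Ω` for `Ω \ B` cannot lower the integral
(the bathtub principle). If `v` is strictly increasing, the loss `∫_{B \ Ω} (v R - v ‖x‖) dη`
has a strictly positive integrand, so equality forces `B \ Ω`, and with it `Ω \ B`, to be
`η`-null; `η` and Lebesgue measure have the same null sets because the density is positive.
Nonincreasing `u` is handled through `-u`. -/

open MeasureTheory Set Metric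

/-- The weighted measure `η` on `ℝⁿ`, i.e. the Lebesgue measure with density
`x ↦ exp (-φ ‖x‖)`. -/
noncomputable def wMeasure (n : ℕ) (φ : ℝ → ℝ) : Measure (EuclideanSpace ℝ (Fin n)) :=
  volume.withDensity fun x => ENNReal.ofReal (Real.exp (-φ ‖x‖))

section Bathtub

variable {α : Type*} [MeasurableSpace α] {μ : Measure α} {s t : Set α} {f : α → ℝ} {c : ℝ}

theorem setIntegral_sub_setIntegral_eq_of_measure_eq (hs : MeasurableSet s)
    (ht : MeasurableSet t) (hst : μ s = μ t) (hfin : μ s ≠ ⊤)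
    (hfs : IntegrableOn f s μ) (hft : IntegrableOn f t μ) (c : ℝ) :
    ∫ x in s, f x ∂μ - ∫ x in t, f x ∂μ =
      ∫ x in s \ t, (f x - c) ∂μ + ∫ x in t \ s, (c - f x) ∂μ := by
  have hc_st : IntegrableOn (fun _ => c) (s \ t) μ :=
    integrableOn_const (measure_ne_top_of_subset sdiff_subset hfin)
  have hc_ts : IntegrableOn (fun _ => c) (t \ s) μ :=
    integrableOn_const (measure_ne_top_of_subset sdiff_subset (hst ▸ hfin))
  have hdiff : μ.real (s \ t) = μ.real (t \ s) := by
    rw [measureReal_def, measureReal_def, measure_sdiff_symm hs.nullMeasurableSet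
      ht.nullMeasurableSet hst (measure_ne_top_of_subset inter_subset_left hfin)]
  rw [integral_sub (hfs.mono_set sdiff_subset) hc_st,
    integral_sub hc_ts (hft.mono_set sdiff_subset), setIntegral_const, setIntegral_const,
    smul_eq_mul, smul_eq_mul, hdiff,
    ← integral_inter_add_sdiff ht hfs, ← integral_inter_add_sdiff hs hft, inter_comm]
  ring

theorem setIntegral_le_setIntegral_of_measure_eq (hs : MeasurableSet s) (ht : MeasurableSet t)
    (hst : μ s = μ t) (hfin : μ s ≠ ⊤) (hfs : IntegrableOn f s μ) (hft : IntegrableOn f t μ)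
    (h_s : ∀ x ∈ s \ t, c ≤ f x) (h_t : ∀ x ∈ t \ s, f x ≤ c) :
    ∫ x in t, f x ∂μ ≤ ∫ x in s, f x ∂μ := by
  have h := setIntegral_sub_setIntegral_eq_of_measure_eq hs ht hst hfin hfs hft c
  have h₁ : 0 ≤ ∫ x in s \ t, (f x - c) ∂μ :=
    setIntegral_nonneg (hs.diff ht) fun x hx => sub_nonneg.2 (h_s x hx)
  have h₂ : 0 ≤ ∫ x in t \ s, (c - f x) ∂μ :=
    setIntegral_nonneg (ht.diff hs) fun x hx => sub_nonneg.2 (h_t x hx)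
  linarith

theorem setIntegral_eq_setIntegral_iff_of_measure_eq (hs : MeasurableSet s)
    (ht : MeasurableSet t) (hst : μ s = μ t) (hfin : μ s ≠ ⊤) (hfs : IntegrableOn f s μ)
    (hft : IntegrableOn f t μ) (h_s : ∀ x ∈ s \ t, c ≤ f x) (h_t : ∀ x ∈ t \ s, f x < c) :
    ∫ x in s, f x ∂μ = ∫ x in t, f x ∂μ ↔ μ (symmDiff s t) = 0 := by
  refine ⟨fun heq => ?_, fun h => setIntegral_congr_set (measure_symmDiff_eq_zero_iff.1 h)⟩
  have h := setIntegral_sub_setIntegral_eq_of_measure_eq hs ht hst hfin hfs hft c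
  have h₁ : 0 ≤ ∫ x in s \ t, (f x - c) ∂μ :=
    setIntegral_nonneg (hs.diff ht) fun x hx => sub_nonneg.2 (h_s x hx)
  have h₂ : 0 ≤ ∫ x in t \ s, (c - f x) ∂μ :=
    setIntegral_nonneg (ht.diff hs) fun x hx => sub_nonneg.2 (h_t x hx).le
  have h_zero : ∫ x in t \ s, (c - f x) ∂μ = 0 := by linarith
  have h_ts : μ (t \ s) = 0 := by
    have hpos := setIntegral_pos_iff_support_of_nonneg_ae
      ((ae_restrict_iff' (ht.diff hs)).2 (.of_forall fun x hx => sub_nonneg.2 (h_t x hx).le))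
      ((integrableOn_const (measure_ne_top_of_subset sdiff_subset (hst ▸ hfin))).sub
        (hft.mono_set sdiff_subset))
    rwa [h_zero, lt_self_iff_false, false_iff, not_lt, nonpos_iff_eq_zero, inter_eq_right.2
      fun x hx => Function.mem_support.2 (sub_ne_zero.2 (h_t x hx).ne')] at hpos
  have h_st : μ (s \ t) = 0 := by
    rw [measure_sdiff_symm hs.nullMeasurableSet ht.nullMeasurableSet hst
      (measure_ne_top_of_subset inter_subset_left hfin), h_ts]
  rw [symmDiff_def]
  exact measure_union_null h_st h_ts

end Bathtub

section Radial

variable {E : Type*} [NormedAddCommGroup E] [MeasurableSpace E] [OpensMeasurableSpace E]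
  {v : ℝ → ℝ}

theorem MonotoneOn.measurable_comp_norm (hv : MonotoneOn v (Ici 0)) :
    Measurable fun x : E => v ‖x‖ := by
  have hmono : Monotone fun t => v (max t 0) := fun s t hst =>
    hv (le_max_right s 0) (le_max_right t 0) (max_le_max_right 0 hst)
  simpa only [Function.comp_def, max_eq_left (norm_nonneg _)] using
    hmono.measurable.comp (measurable_norm (α := E))

variable [ProperSpace E] {μ : Measure E} [IsFiniteMeasureOnCompacts μ] {Ω : Set E} {R : ℝ}

theorem integrableOn_comp_norm_of_isBounded (hv : Measurable fun x : E => v ‖x‖)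
    (hbd : ∀ M : ℝ, ∃ C : ℝ, ∀ t ∈ Icc (0 : ℝ) M, |v t| ≤ C) {S : Set E}
    (hS : Bornology.IsBounded S) : IntegrableOn (fun x => v ‖x‖) S μ := by
  obtain ⟨M, hM⟩ := hS.subset_closedBall 0
  obtain ⟨C, hC⟩ := hbd M
  refine IntegrableOn.mono_set ?_ hM
  refine Measure.integrableOn_of_bounded (M := C) (isCompact_closedBall 0 M).measure_ne_top
    hv.aestronglyMeasurable ?_
  filter_upwards [ae_restrict_mem measurableSet_closedBall] with x hx
  exact hC ‖x‖ ⟨norm_nonneg x, mem_closedBall_zero_iff.1 hx⟩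

theorem setIntegral_ball_le_setIntegral_of_monotoneOn (hΩ : MeasurableSet Ω)
    (hΩ_bdd : Bornology.IsBounded Ω) (hR : 0 ≤ R) (hvol : μ Ω = μ (ball 0 R))
    (hv : MonotoneOn v (Ici 0))
    (hbd : ∀ M : ℝ, ∃ C : ℝ, ∀ t ∈ Icc (0 : ℝ) M, |v t| ≤ C) :
    ∫ x in ball 0 R, v ‖x‖ ∂μ ≤ ∫ x in Ω, v ‖x‖ ∂μ :=
  setIntegral_le_setIntegral_of_measure_eq hΩ measurableSet_ball hvol
    hΩ_bdd.measure_lt_top.ne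
    (integrableOn_comp_norm_of_isBounded hv.measurable_comp_norm hbd hΩ_bdd)
    (integrableOn_comp_norm_of_isBounded hv.measurable_comp_norm hbd isBounded_ball)
    (fun x hx => hv hR (norm_nonneg x) (not_lt.1 (mt mem_ball_zero_iff.2 hx.2)))
    (fun x hx => hv (norm_nonneg x) hR (mem_ball_zero_iff.1 hx.1).le)

theorem setIntegral_eq_setIntegral_ball_iff_of_strictMonoOn (hΩ : MeasurableSet Ω)
    (hΩ_bdd : Bornology.IsBounded Ω) (hR : 0 ≤ R) (hvol : μ Ω = μ (ball 0 R))
    (hv : StrictMonoOn v (Ici 0))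
    (hbd : ∀ M : ℝ, ∃ C : ℝ, ∀ t ∈ Icc (0 : ℝ) M, |v t| ≤ C) :
    ∫ x in Ω, v ‖x‖ ∂μ = ∫ x in ball 0 R, v ‖x‖ ∂μ ↔
      μ (symmDiff Ω (ball 0 R)) = 0 :=
  setIntegral_eq_setIntegral_iff_of_measure_eq hΩ measurableSet_ball hvol
    hΩ_bdd.measure_lt_top.ne
    (integrableOn_comp_norm_of_isBounded hv.monotoneOn.measurable_comp_norm hbd hΩ_bdd)
    (integrableOn_comp_norm_of_isBounded hv.monotoneOn.measurable_comp_norm hbd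
      isBounded_ball)
    (fun x hx => hv.monotoneOn hR (norm_nonneg x)
      (not_lt.1 (mt mem_ball_zero_iff.2 hx.2)))
    (fun x hx => hv (norm_nonneg x) hR (mem_ball_zero_iff.1 hx.1))

theorem setIntegral_le_setIntegral_ball_of_antitoneOn (hΩ : MeasurableSet Ω)
    (hΩ_bdd : Bornology.IsBounded Ω) (hR : 0 ≤ R) (hvol : μ Ω = μ (ball 0 R))
    (hv : AntitoneOn v (Ici 0))
    (hbd : ∀ M : ℝ, ∃ C : ℝ, ∀ t ∈ Icc (0 : ℝ) M, |v t| ≤ C) :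
    ∫ x in Ω, v ‖x‖ ∂μ ≤ ∫ x in ball 0 R, v ‖x‖ ∂μ := by
  have h := setIntegral_ball_le_setIntegral_of_monotoneOn hΩ hΩ_bdd hR hvol hv.neg
    (by simpa only [abs_neg] using hbd)
  rwa [integral_neg, integral_neg, neg_le_neg_iff] at h

theorem setIntegral_eq_setIntegral_ball_iff_of_strictAntiOn (hΩ : MeasurableSet Ω)
    (hΩ_bdd : Bornology.IsBounded Ω) (hR : 0 ≤ R) (hvol : μ Ω = μ (ball 0 R))
    (hv : StrictAntiOn v (Ici 0))
    (hbd : ∀ M : ℝ, ∃ C : ℝ, ∀ t ∈ Icc (0 : ℝ) M, |v t| ≤ C) :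
    ∫ x in Ω, v ‖x‖ ∂μ = ∫ x in ball 0 R, v ‖x‖ ∂μ ↔
      μ (symmDiff Ω (ball 0 R)) = 0 := by
  have h := setIntegral_eq_setIntegral_ball_iff_of_strictMonoOn hΩ hΩ_bdd hR hvol hv.neg
    (by simpa only [abs_neg] using hbd)
  rwa [integral_neg, integral_neg, neg_inj] at h

end Radial

theorem isLocallyFiniteMeasure_wMeasure {n : ℕ} {φ : ℝ → ℝ} (hφ : Continuous φ) :
    IsLocallyFiniteMeasure (wMeasure n φ) :=
  IsLocallyFiniteMeasure.withDensity_ofReal (by fun_prop)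

theorem wMeasure_eq_zero_iff {n : ℕ} {φ : ℝ → ℝ} (hφ : Measurable φ)
    (A : Set (EuclideanSpace ℝ (Fin n))) : wMeasure n φ A = 0 ↔ volume A = 0 := by
  rw [wMeasure, withDensity_apply_eq_zero' (by fun_prop)]
  simp [Real.exp_pos]

theorem wMeasure_radial_integral_comparison_general
    (n : ℕ) (φ : ℝ → ℝ) (hφ : Continuous φ)
    (Ω : Set (EuclideanSpace ℝ (Fin n)))
    (hΩ_meas : MeasurableSet Ω) (hΩ_bdd : Bornology.IsBounded Ω)
    (R : ℝ) (hR : 0 < R)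
    (hvol : wMeasure n φ Ω = wMeasure n φ (ball (0 : EuclideanSpace ℝ (Fin n)) R)) :
    (∀ v : ℝ → ℝ, MonotoneOn v (Ici 0) →
      (∀ M : ℝ, ∃ C : ℝ, ∀ t ∈ Icc (0 : ℝ) M, |v t| ≤ C) →
      (∫ x in Ω, v ‖x‖ ∂(wMeasure n φ)) ≥
        ∫ x in ball (0 : EuclideanSpace ℝ (Fin n)) R, v ‖x‖ ∂(wMeasure n φ)) ∧
    (∀ u : ℝ → ℝ, AntitoneOn u (Ici 0) →
      (∀ M : ℝ, ∃ C : ℝ, ∀ t ∈ Icc (0 : ℝ) M, |u t| ≤ C) →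
      (∫ x in Ω, u ‖x‖ ∂(wMeasure n φ)) ≤
        ∫ x in ball (0 : EuclideanSpace ℝ (Fin n)) R, u ‖x‖ ∂(wMeasure n φ)) ∧
    (∀ v : ℝ → ℝ, StrictMonoOn v (Ici 0) →
      (∀ M : ℝ, ∃ C : ℝ, ∀ t ∈ Icc (0 : ℝ) M, |v t| ≤ C) →
      ((∫ x in Ω, v ‖x‖ ∂(wMeasure n φ)) =
        (∫ x in ball (0 : EuclideanSpace ℝ (Fin n)) R, v ‖x‖ ∂(wMeasure n φ)) ↔
        volume (symmDiff Ω (ball (0 : EuclideanSpace ℝ (Fin n)) R)) = 0)) ∧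
    (∀ u : ℝ → ℝ, StrictAntiOn u (Ici 0) →
      (∀ M : ℝ, ∃ C : ℝ, ∀ t ∈ Icc (0 : ℝ) M, |u t| ≤ C) →
      ((∫ x in Ω, u ‖x‖ ∂(wMeasure n φ)) =
        (∫ x in ball (0 : EuclideanSpace ℝ (Fin n)) R, u ‖x‖ ∂(wMeasure n φ)) ↔
        volume (symmDiff Ω (ball (0 : EuclideanSpace ℝ (Fin n)) R)) = 0)) := by
  have := isLocallyFiniteMeasure_wMeasure (n := n) hφ
  have hnull := wMeasure_eq_zero_iff (n := n) hφ.measurable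
  refine ⟨fun v hv hbd => ?_, fun u hu hbd => ?_, fun v hv hbd => ?_, fun u hu hbd => ?_⟩
  · exact setIntegral_ball_le_setIntegral_of_monotoneOn hΩ_meas hΩ_bdd hR.le hvol hv hbd
  · exact setIntegral_le_setIntegral_ball_of_antitoneOn hΩ_meas hΩ_bdd hR.le hvol hu hbd
  · exact (setIntegral_eq_setIntegral_ball_iff_of_strictMonoOn hΩ_meas hΩ_bdd hR.le hvol hv
      hbd).trans (hnull _)
  · exact (setIntegral_eq_setIntegral_ball_iff_of_strictAntiOn hΩ_meas hΩ_bdd hR.le hvol hu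
      hbd).trans (hnull _)

/-- **Lemma 4.4 (Euclidean case)**: if `Ω ⊆ ℝⁿ` is a bounded measurable set with the same
weighted volume as the ball `B_R(o)` centered at the origin, then for every nondecreasing
function `v` (bounded on bounded sets) one has
`∫_Ω v(‖x‖) dη ≥ ∫_{B_R(o)} v(‖x‖) dη`, and for every nonincreasing function `u`
(bounded on bounded sets) one has `∫_Ω u(‖x‖) dη ≤ ∫_{B_R(o)} u(‖x‖) dη`; moreover, for
strictly monotone `v` (resp. `u`), equality holds if and only if the symmetric difference
of `Ω` and `B_R(o)` is Lebesgue-null. -/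
theorem wMeasure_radial_integral_comparison
    (n : ℕ) (hn : 2 ≤ n) (φ : ℝ → ℝ) (hφ : Continuous φ)
    (Ω : Set (EuclideanSpace ℝ (Fin n)))
    (hΩ_meas : MeasurableSet Ω) (hΩ_bdd : Bornology.IsBounded Ω)
    (R : ℝ) (hR : 0 < R)
    (hvol : wMeasure n φ Ω = wMeasure n φ (ball (0 : EuclideanSpace ℝ (Fin n)) R)) :
    (∀ v : ℝ → ℝ, MonotoneOn v (Ici 0) →
      (∀ M : ℝ, ∃ C : ℝ, ∀ t ∈ Icc (0 : ℝ) M, |v t| ≤ C) →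
      (∫ x in Ω, v ‖x‖ ∂(wMeasure n φ)) ≥
        ∫ x in ball (0 : EuclideanSpace ℝ (Fin n)) R, v ‖x‖ ∂(wMeasure n φ)) ∧
    (∀ u : ℝ → ℝ, AntitoneOn u (Ici 0) →
      (∀ M : ℝ, ∃ C : ℝ, ∀ t ∈ Icc (0 : ℝ) M, |u t| ≤ C) →
      (∫ x in Ω, u ‖x‖ ∂(wMeasure n φ)) ≤
        ∫ x in ball (0 : EuclideanSpace ℝ (Fin n)) R, u ‖x‖ ∂(wMeasure n φ)) ∧
    (∀ v : ℝ → ℝ, StrictMonoOn v (Ici 0) →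
      (∀ M : ℝ, ∃ C : ℝ, ∀ t ∈ Icc (0 : ℝ) M, |v t| ≤ C) →
      ((∫ x in Ω, v ‖x‖ ∂(wMeasure n φ)) =
        (∫ x in ball (0 : EuclideanSpace ℝ (Fin n)) R, v ‖x‖ ∂(wMeasure n φ)) ↔
        volume (symmDiff Ω (ball (0 : EuclideanSpace ℝ (Fin n)) R)) = 0)) ∧
    (∀ u : ℝ → ℝ, StrictAntiOn u (Ici 0) →
      (∀ M : ℝ, ∃ C : ℝ, ∀ t ∈ Icc (0 : ℝ) M, |u t| ≤ C) →
      ((∫ x in Ω, u ‖x‖ ∂(wMeasure n φ)) =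
        (∫ x in ball (0 : EuclideanSpace ℝ (Fin n)) R, u ‖x‖ ∂(wMeasure n φ)) ↔
        volume (symmDiff Ω (ball (0 : EuclideanSpace ℝ (Fin n)) R)) = 0)) :=
  wMeasure_radial_integral_comparison_general n φ hφ Ω hΩ_meas hΩ_bdd R hR hvol
end

section
/- Let r₀ > 0 and μ > 0, let p : [0,r₀] → ℝ be continuous, positive, and differentiable on [0,r₀), and let T : [0,r₀] → ℝ be continuously differentiable with T' differentiable on [0,r₀), such that T'(0) = 0, T(t) > 0 for all t ∈ [0,r₀), T(r₀) = 0, and (p T')'(t) + μ p(t) T(t) = 0 for all t ∈ [0,r₀) (one-sided derivative at 0). Then T'(t) < 0 for every t ∈ (0,r₀). -/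
open Set

/-! The flux `p T'` vanishes at `0` and its derivative `-μ p T` is negative on `[0, r₀)`, so it is
negative on `(0, r₀)`; since `p > 0`, so is `T'`. -/

theorem strictAntiOn_Icc_of_hasDerivWithinAt_Ioo_neg {a b : ℝ} {f f' : ℝ → ℝ}
    (hf : ContinuousOn f (Icc a b))
    (hf' : ∀ x ∈ Ioo a b, HasDerivWithinAt f (f' x) (Ioo a b) x)
    (hf'_neg : ∀ x ∈ Ioo a b, f' x < 0) :
    StrictAntiOn f (Icc a b) :=
  strictAntiOn_of_hasDerivWithinAt_neg (convex_Icc a b) hf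
    (by simpa only [interior_Icc] using hf') (by simpa only [interior_Icc] using hf'_neg)

theorem radial_neumann_mode_strictly_decreasing_general
    (r₀ μ : ℝ) (hμ : 0 < μ)
    (p T T' : ℝ → ℝ)
    (hp_cont : ContinuousOn p (Icc 0 r₀))
    (hp_pos : ∀ t ∈ Icc (0 : ℝ) r₀, 0 < p t)
    (hT'cont : ContinuousOn T' (Icc 0 r₀))
    (hT'0 : T' 0 = 0)
    (hT_pos : ∀ t ∈ Ico (0 : ℝ) r₀, 0 < T t)
    (hODE : ∀ t ∈ Ico (0 : ℝ) r₀,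
      HasDerivWithinAt (fun s => p s * T' s) (-(μ * p t * T t)) (Ico 0 r₀) t) :
    ∀ t ∈ Ioo (0 : ℝ) r₀, T' t < 0 := by
  intro t ht
  have hflux_anti : StrictAntiOn (fun s => p s * T' s) (Icc 0 r₀) :=
    strictAntiOn_Icc_of_hasDerivWithinAt_Ioo_neg (hp_cont.mul hT'cont)
      (fun x hx => (hODE x (Ioo_subset_Ico_self hx)).mono Ioo_subset_Ico_self)
      (fun x hx => neg_neg_of_pos <| mul_pos (mul_pos hμ (hp_pos x (Ioo_subset_Icc_self hx)))
        (hT_pos x (Ioo_subset_Ico_self hx)))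
  have hflux_neg : p t * T' t < 0 := by
    simpa only [hT'0, mul_zero] using
      hflux_anti (left_mem_Icc.2 (ht.1.trans ht.2).le) (Ioo_subset_Icc_self ht) ht.1
  exact neg_of_mul_neg_right hflux_neg (hp_pos t (Ioo_subset_Icc_self ht)).le

/-- **Strict decrease of the radial part of a sign-changing Neumann mode on its first
nodal interval** (from Section 5): if `p` is continuous, positive on `[0,r₀]` and
differentiable on `[0,r₀)`, `T` is continuously differentiable with `T'` differentiable on
`[0,r₀)`, `T'(0) = 0`, `T > 0` on `[0,r₀)`, `T(r₀) = 0`, and `(p T')' + μ p T = 0` on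
`[0,r₀)` (one-sided derivative at `0`) with `μ > 0`, then `T' < 0` on `(0,r₀)`. -/
theorem radial_neumann_mode_strictly_decreasing
    (r₀ μ : ℝ) (hr₀ : 0 < r₀) (hμ : 0 < μ)
    (p T T' T'' : ℝ → ℝ)
    (hp_cont : ContinuousOn p (Icc 0 r₀))
    (hp_pos : ∀ t ∈ Icc (0 : ℝ) r₀, 0 < p t)
    (hp_diff : ∀ t ∈ Ico (0 : ℝ) r₀, DifferentiableWithinAt ℝ p (Ico 0 r₀) t)
    (hT : ∀ t ∈ Icc (0 : ℝ) r₀, HasDerivWithinAt T (T' t) (Icc 0 r₀) t)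
    (hT'cont : ContinuousOn T' (Icc 0 r₀))
    (hT'diff : ∀ t ∈ Ico (0 : ℝ) r₀, HasDerivWithinAt T' (T'' t) (Ico 0 r₀) t)
    (hT'0 : T' 0 = 0)
    (hT_pos : ∀ t ∈ Ico (0 : ℝ) r₀, 0 < T t)
    (hTr₀ : T r₀ = 0)
    (hODE : ∀ t ∈ Ico (0 : ℝ) r₀,
      HasDerivWithinAt (fun s => p s * T' s) (-(μ * p t * T t)) (Ico 0 r₀) t) :
    ∀ t ∈ Ioo (0 : ℝ) r₀, T' t < 0 :=
  radial_neumann_mode_strictly_decreasing_general r₀ μ hμ p T T' hp_cont hp_pos hT'cont hT'0 hT_pos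
    hODE
end

section
/- Let r₀ > 0, let w : (0,r₀] → ℝ be continuous and nonnegative, let p : (0,r₀] → ℝ be positive and twice continuously differentiable, and suppose (−p'/p)'(t) − w(t) ≥ 0 for all t ∈ (0,r₀). Let μ₀, μ₁ ∈ ℝ. Let T₁ : (0,r₀] → ℝ be twice continuously differentiable with T₁ > 0 and T₁' ≥ 0 on (0,r₀], satisfying (p T₁')'(t) + (μ₁ − w(t)) p(t) T₁(t) = 0 on (0,r₀]. Let T₀ : (0,r₀] → ℝ be three times continuously differentiable with T₀'(t) ≤ 0 for all t ∈ (0,r₀], T₀'(r₀) < 0 and T₀''(r₀) > 0, satisfying (p T₀')'(t) + μ₀ p(t) T₀(t) = 0 on (0,r₀]. Assume p(t)(T₁(t) T₀''(t) − T₁'(t) T₀'(t)) → 0 as t → 0⁺ and that s ↦ (μ₁ − μ₀ − (p'/p)'(s) − w(s)) p(s) T₁(s) T₀'(s) is integrable on (0,r₀). Then μ₁ < μ₀. -/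
/-!
Differentiating the equation for `T₀` shows that `T₀'` solves the equation of `T₁` with
`(μ₁, w)` replaced by `(μ₀, (-p'/p)')`, so the weighted Wronskian `W = p (T₁ T₀'' - T₁' T₀')`
of `T₁` and `T₀'` has `W' = (μ₁ - μ₀ + (-p'/p)' - w) p T₁ T₀'`. If `μ₁ ≥ μ₀`, then `W' ≤ 0`,
so `W` is antitone on `(0, r₀]`; but `W(0⁺) = 0` while `W(r₀) > 0` by the sign conditions
at `r₀`.
-/

open Set MeasureTheory Filter Topology

def weightedWronskian (p u u' v v' : ℝ → ℝ) (t : ℝ) : ℝ :=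
  p t * (u t * v' t - u' t * v t)

lemma weightedWronskian_eq (p u u' v v' : ℝ → ℝ) :
    weightedWronskian p u u' v v' = fun s => u s * (p s * v' s) - (p s * u' s) * v s := by
  funext s
  simp only [weightedWronskian]
  ring

lemma hasDerivAt_of_forall_mem_Ioc {f f' : ℝ → ℝ} {a b t : ℝ}
    (h : ∀ s ∈ Ioc a b, HasDerivWithinAt f (f' s) (Ioc a b) s) (ht : t ∈ Ioo a b) :
    HasDerivAt f (f' t) t :=
  (h t (Ioo_subset_Ioc_self ht)).hasDerivAt (Ioc_mem_nhds ht.1 ht.2)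

lemma le_of_tendsto_nhdsGT_of_hasDerivAt_nonpos {f f' : ℝ → ℝ} {a b l : ℝ} (hab : a < b)
    (hf : ContinuousOn f (Ioc a b)) (hf' : ∀ t ∈ Ioo a b, HasDerivAt f (f' t) t)
    (hf'_nonpos : ∀ t ∈ Ioo a b, f' t ≤ 0) (hlim : Tendsto f (𝓝[>] a) (𝓝 l)) :
    f b ≤ l := by
  have hanti : AntitoneOn f (Ioc a b) := by
    refine antitoneOn_of_hasDerivWithinAt_nonpos (f' := f') (convex_Ioc a b) hf ?_ ?_ <;>
      rw [interior_Ioc]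
    · exact fun t ht => (hf' t ht).hasDerivWithinAt
    · exact hf'_nonpos
  refine ge_of_tendsto hlim ?_
  filter_upwards [Ioo_mem_nhdsGT hab] with t ht
  exact hanti (Ioo_subset_Ioc_self ht) (right_mem_Ioc.2 hab) ht.2.le

lemma second_deriv_eq_of_sturmLiouville {p T T' : ℝ → ℝ} {p'₀ T''₀ μ t : ℝ}
    (hp : HasDerivAt p p'₀ t) (hT' : HasDerivAt T' T''₀ t)
    (hode : HasDerivAt (fun s => p s * T' s) (-(μ * p t * T t)) t) (hpt : p t ≠ 0) :
    T''₀ = -(μ * T t) + -(p'₀ / p t) * T' t := by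
  have h := hode.unique (hp.mul hT')
  field_simp
  linarith

lemma eventuallyEq_of_sturmLiouville_on_Ioc {p p' T T' T'' : ℝ → ℝ} {μ a b t : ℝ}
    (hp_ne : ∀ s ∈ Ioc a b, p s ≠ 0) (hp : ∀ s ∈ Ioc a b, HasDerivWithinAt p (p' s) (Ioc a b) s)
    (hT' : ∀ s ∈ Ioc a b, HasDerivWithinAt T' (T'' s) (Ioc a b) s)
    (hode : ∀ s ∈ Ioc a b,
      HasDerivWithinAt (fun s => p s * T' s) (-(μ * p s * T s)) (Ioc a b) s)
    (ht : t ∈ Ioo a b) :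
    T'' =ᶠ[𝓝 t] fun s => -(μ * T s) + -(p' s / p s) * T' s :=
  eventuallyEq_of_mem (Ioo_mem_nhds ht.1 ht.2) fun _ hs =>
    second_deriv_eq_of_sturmLiouville (hasDerivAt_of_forall_mem_Ioc hp hs)
      (hasDerivAt_of_forall_mem_Ioc hT' hs) (hasDerivAt_of_forall_mem_Ioc hode hs)
      (hp_ne _ (Ioo_subset_Ioc_self hs))

lemma continuousOn_weightedWronskian {p u u' v v' : ℝ → ℝ} {s : Set ℝ} (hp : ContinuousOn p s)
    (hu : ContinuousOn u s) (hpu' : ContinuousOn (fun t => p t * u' t) s)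
    (hv : ContinuousOn v s) (hv' : ContinuousOn v' s) :
    ContinuousOn (weightedWronskian p u u' v v') s := by
  rw [weightedWronskian_eq]
  exact (hu.mul (hp.mul hv')).sub (hpu'.mul hv)

lemma hasDerivAt_weightedWronskian {p p' m w T₁ T₁' T₀ T₀' T₀'' : ℝ → ℝ} {μ₀ μ₁ t : ℝ}
    (hp : HasDerivAt p (p' t) t) (hpt : p t ≠ 0)
    (hm : HasDerivAt (fun s => -(p' s / p s)) (m t) t)
    (hT₁ : HasDerivAt T₁ (T₁' t) t)
    (hT₁ode : HasDerivAt (fun s => p s * T₁' s) (-((μ₁ - w t) * p t * T₁ t)) t)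
    (hT₀ : HasDerivAt T₀ (T₀' t) t) (hT₀' : HasDerivAt T₀' (T₀'' t) t)
    (hT₀ode : T₀'' =ᶠ[𝓝 t] fun s => -(μ₀ * T₀ s) + -(p' s / p s) * T₀' s) :
    HasDerivAt (weightedWronskian p T₁ T₁' T₀' T₀'')
      ((μ₁ - μ₀ + (m t - w t)) * p t * T₁ t * T₀' t) t := by
  have hT₀'' := ((hT₀.const_mul μ₀).neg.add (hm.mul hT₀')).congr_of_eventuallyEq hT₀ode
  rw [weightedWronskian_eq]
  refine ((hT₁.mul (hp.mul hT₀'')).sub (hT₁ode.mul hT₀')).congr_deriv ?_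
  rw [Pi.mul_apply, hT₀ode.eq_of_nhds]
  field_simp
  ring

theorem radial_neumann_eigenvalue_comparison_general
    (r₀ μ₀ μ₁ : ℝ) (hr₀ : 0 < r₀)
    (w p p' m T₁ T₁' T₀ T₀' T₀'' T₀''' : ℝ → ℝ)
    (hp_pos : ∀ t ∈ Ioc (0 : ℝ) r₀, 0 < p t)
    (hp : ∀ t ∈ Ioc (0 : ℝ) r₀, HasDerivWithinAt p (p' t) (Ioc 0 r₀) t)
    (hm : ∀ t ∈ Ioo (0 : ℝ) r₀, HasDerivAt (fun s => -(p' s / p s)) (m t) t)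
    (hmw : ∀ t ∈ Ioo (0 : ℝ) r₀, w t ≤ m t)
    (hT₁_pos : ∀ t ∈ Ioc (0 : ℝ) r₀, 0 < T₁ t)
    (hT₁ : ∀ t ∈ Ioc (0 : ℝ) r₀, HasDerivWithinAt T₁ (T₁' t) (Ioc 0 r₀) t)
    (hT₁'_nonneg : ∀ t ∈ Ioc (0 : ℝ) r₀, 0 ≤ T₁' t)
    (hT₁ode : ∀ t ∈ Ioc (0 : ℝ) r₀,
      HasDerivWithinAt (fun s => p s * T₁' s) (-((μ₁ - w t) * p t * T₁ t)) (Ioc 0 r₀) t)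
    (hT₀ : ∀ t ∈ Ioc (0 : ℝ) r₀, HasDerivWithinAt T₀ (T₀' t) (Ioc 0 r₀) t)
    (hT₀' : ∀ t ∈ Ioc (0 : ℝ) r₀, HasDerivWithinAt T₀' (T₀'' t) (Ioc 0 r₀) t)
    (hT₀'' : ∀ t ∈ Ioc (0 : ℝ) r₀, HasDerivWithinAt T₀'' (T₀''' t) (Ioc 0 r₀) t)
    (hT₀'_nonpos : ∀ t ∈ Ioc (0 : ℝ) r₀, T₀' t ≤ 0)
    (hT₀''r₀ : 0 < T₀'' r₀)
    (hT₀ode : ∀ t ∈ Ioc (0 : ℝ) r₀,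
      HasDerivWithinAt (fun s => p s * T₀' s) (-(μ₀ * p t * T₀ t)) (Ioc 0 r₀) t)
    (hlim : Filter.Tendsto (fun t => p t * (T₁ t * T₀'' t - T₁' t * T₀' t))
      (nhdsWithin 0 (Ioi 0)) (nhds 0)) :
    μ₁ < μ₀ := by
  by_contra! hμ
  set W := weightedWronskian p T₁ T₁' T₀' T₀''
  have hr₀_mem : r₀ ∈ Ioc 0 r₀ := right_mem_Ioc.2 hr₀
  have hp_ne : ∀ t ∈ Ioc 0 r₀, p t ≠ 0 := fun t ht => (hp_pos t ht).ne'
  have hW_deriv : ∀ t ∈ Ioo 0 r₀,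
      HasDerivAt W ((μ₁ - μ₀ + (m t - w t)) * p t * T₁ t * T₀' t) t := fun t ht =>
    hasDerivAt_weightedWronskian (hasDerivAt_of_forall_mem_Ioc hp ht)
      (hp_ne t (Ioo_subset_Ioc_self ht)) (hm t ht) (hasDerivAt_of_forall_mem_Ioc hT₁ ht)
      (hasDerivAt_of_forall_mem_Ioc hT₁ode ht) (hasDerivAt_of_forall_mem_Ioc hT₀ ht)
      (hasDerivAt_of_forall_mem_Ioc hT₀' ht)
      (eventuallyEq_of_sturmLiouville_on_Ioc hp_ne hp hT₀' hT₀ode ht)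
  have hW'_nonpos : ∀ t ∈ Ioo 0 r₀, (μ₁ - μ₀ + (m t - w t)) * p t * T₁ t * T₀' t ≤ 0 := by
    intro t ht
    have ht' := Ioo_subset_Ioc_self ht
    exact mul_nonpos_of_nonneg_of_nonpos (mul_nonneg (mul_nonneg (by linarith [hmw t ht])
      (hp_pos t ht').le) (hT₁_pos t ht').le) (hT₀'_nonpos t ht')
  have hW_cont : ContinuousOn W (Ioc 0 r₀) :=
    continuousOn_weightedWronskian (fun t ht => (hp t ht).continuousWithinAt)
      (fun t ht => (hT₁ t ht).continuousWithinAt) (fun t ht => (hT₁ode t ht).continuousWithinAt)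
      (fun t ht => (hT₀' t ht).continuousWithinAt) (fun t ht => (hT₀'' t ht).continuousWithinAt)
  have hW_r₀ : 0 < W r₀ :=
    mul_pos (hp_pos r₀ hr₀_mem) (sub_pos_of_lt (lt_of_le_of_lt
      (mul_nonpos_of_nonneg_of_nonpos (hT₁'_nonneg r₀ hr₀_mem) (hT₀'_nonpos r₀ hr₀_mem))
      (mul_pos (hT₁_pos r₀ hr₀_mem) hT₀''r₀)))
  exact hW_r₀.not_ge
    (le_of_tendsto_nhdsGT_of_hasDerivAt_nonpos hr₀ hW_cont hW_deriv hW'_nonpos hlim)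

/-- **The first spherical-harmonic Neumann eigenvalue is smaller than the second purely
radial one** (key comparison in Section 5, identifying `μ_{1,1,φ}` as the first nonzero
Neumann eigenvalue): with `w ≥ 0` continuous, `p > 0` twice continuously differentiable
satisfying `(-p'/p)' - w ≥ 0` (here `m` denotes the derivative of `-p'/p`), `T₁ > 0` with
`T₁' ≥ 0` solving `(p T₁')' + (μ₁ - w) p T₁ = 0` on `(0,r₀]`, and `T₀` with `T₀' ≤ 0`,
`T₀'(r₀) < 0`, `T₀''(r₀) > 0` solving `(p T₀')' + μ₀ p T₀ = 0` on `(0,r₀]`, together with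
the vanishing of `p (T₁ T₀'' - T₁' T₀')` at `0⁺` and integrability of
`s ↦ (μ₁ - μ₀ + m(s) - w(s)) p(s) T₁(s) T₀'(s)` on `(0,r₀)`, one has `μ₁ < μ₀`. -/
theorem radial_neumann_eigenvalue_comparison
    (r₀ μ₀ μ₁ : ℝ) (hr₀ : 0 < r₀)
    (w p p' m T₁ T₁' T₀ T₀' T₀'' T₀''' : ℝ → ℝ)
    (hw_cont : ContinuousOn w (Ioc 0 r₀))
    (hw_nonneg : ∀ t ∈ Ioc (0 : ℝ) r₀, 0 ≤ w t)
    (hp_pos : ∀ t ∈ Ioc (0 : ℝ) r₀, 0 < p t)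
    (hp : ∀ t ∈ Ioc (0 : ℝ) r₀, HasDerivWithinAt p (p' t) (Ioc 0 r₀) t)
    (hp'_cont : ContinuousOn p' (Ioc 0 r₀))
    (hm : ∀ t ∈ Ioo (0 : ℝ) r₀, HasDerivAt (fun s => -(p' s / p s)) (m t) t)
    (hmw : ∀ t ∈ Ioo (0 : ℝ) r₀, w t ≤ m t)
    (hT₁_pos : ∀ t ∈ Ioc (0 : ℝ) r₀, 0 < T₁ t)
    (hT₁ : ∀ t ∈ Ioc (0 : ℝ) r₀, HasDerivWithinAt T₁ (T₁' t) (Ioc 0 r₀) t)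
    (hT₁'_cont : ContinuousOn T₁' (Ioc 0 r₀))
    (hT₁'_nonneg : ∀ t ∈ Ioc (0 : ℝ) r₀, 0 ≤ T₁' t)
    (hT₁ode : ∀ t ∈ Ioc (0 : ℝ) r₀,
      HasDerivWithinAt (fun s => p s * T₁' s) (-((μ₁ - w t) * p t * T₁ t)) (Ioc 0 r₀) t)
    (hT₀ : ∀ t ∈ Ioc (0 : ℝ) r₀, HasDerivWithinAt T₀ (T₀' t) (Ioc 0 r₀) t)
    (hT₀' : ∀ t ∈ Ioc (0 : ℝ) r₀, HasDerivWithinAt T₀' (T₀'' t) (Ioc 0 r₀) t)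
    (hT₀'' : ∀ t ∈ Ioc (0 : ℝ) r₀, HasDerivWithinAt T₀'' (T₀''' t) (Ioc 0 r₀) t)
    (hT₀'''_cont : ContinuousOn T₀''' (Ioc 0 r₀))
    (hT₀'_nonpos : ∀ t ∈ Ioc (0 : ℝ) r₀, T₀' t ≤ 0)
    (hT₀'r₀ : T₀' r₀ < 0)
    (hT₀''r₀ : 0 < T₀'' r₀)
    (hT₀ode : ∀ t ∈ Ioc (0 : ℝ) r₀,
      HasDerivWithinAt (fun s => p s * T₀' s) (-(μ₀ * p t * T₀ t)) (Ioc 0 r₀) t)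
    (hlim : Filter.Tendsto (fun t => p t * (T₁ t * T₀'' t - T₁' t * T₀' t))
      (nhdsWithin 0 (Ioi 0)) (nhds 0))
    (hint : IntegrableOn (fun s => (μ₁ - μ₀ + (m s - w s)) * p s * T₁ s * T₀' s)
      (Ioo 0 r₀)) :
    μ₁ < μ₀ :=
  radial_neumann_eigenvalue_comparison_general r₀ μ₀ μ₁ hr₀ w p p' m T₁ T₁' T₀ T₀' T₀'' T₀''' hp_pos
    hp hm hmw hT₁_pos hT₁ hT₁'_nonneg hT₁ode hT₀ hT₀' hT₀'' hT₀'_nonpos hT₀''r₀ hT₀ode hlim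
end
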